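/- Let (D, m, k) be a Noetherian local domain with fraction field F and let ϑ : F^× → ℤ^d be an a-valuation that is OK relative to D. Let M be a D-submodule of F (for instance an ideal of D). Then for every g ∈ D∖{0} with v = ϑ(g) and every u ∈ ℤ^d, multiplication by g induces a k-linear injection (M ∩ F_{≥u})/(M ∩ F_{>u}) → (M ∩ F_{≥u+v})/(M ∩ F_{>u+v}). Consequently, for every 1 ≤ h ≤ [k_ϑ:k], the set ϑ^{(h)}(M) satisfies ϑ^{(h)}(M) + S ⊆ ϑ^{(h)}(M), i.e., it is a semigroup ideal of S = ϑ(D∖{0}). -/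

import Mathlib

/-!
Since `ϑ(g x) = ϑ(g) + ϑ(x)` and `⟨a, ·⟩` is additive, multiplication by `g ≠ 0` shifts every
truncation level by exactly `v = ϑ(g)`: it maps `M ∩ F_{≥u}` into `M ∩ F_{≥u+v}`, and an element
of `M ∩ F_{≥u}` lands in `M ∩ F_{>u+v}` only if it already lies in `M ∩ F_{>u}`. So the induced map
of subquotients is injective, and length can only grow along an injection.
-/

noncomputable section

/-- The coercion of an integer vector to a real vector. -/
def zr {d : ℕ} (u : Fin d → ℤ) : Fin d → ℝ := fun i => (u i : ℝ)

/-- Inner product `⟨a,u⟩` of `a : ℝ^d` with an integer vector `u`. -/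
def aip {d : ℕ} (a : Fin d → ℝ) (u : Fin d → ℤ) : ℝ := ∑ i, a i * (u i : ℝ)

/-- Inner product of two real vectors. -/
def rip {d : ℕ} (a u : Fin d → ℝ) : ℝ := ∑ i, a i * u i

/-- `Cone(S)`: the closure of the set of all `ℝ_{≥0}`-linear combinations of elements of `S`. -/
def coneOf {d : ℕ} (S : Set (Fin d → ℤ)) : Set (Fin d → ℝ) :=
  closure {x | ∃ (n : ℕ) (c : Fin n → ℝ) (v : Fin n → Fin d → ℤ),
    (∀ i, 0 ≤ c i) ∧ (∀ i, v i ∈ S) ∧ x = ∑ i, c i • zr (v i)}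

/-- The length `ℓ_R(M)` of an `R`-module `M`, defined as the Krull dimension of its lattice
of submodules, valued in `ℕ∞`. -/
def mlen (R M : Type*) [Semiring R] [AddCommGroup M] [Module R M] : ℕ∞ :=
  (Order.krullDim (Submodule R M)).unbotD 0

/-- The `q`-th Frobenius power `I^{[q]}` of an ideal `I`. -/
def frobPow {R : Type*} [CommSemiring R] (I : Ideal R) (q : ℕ) : Ideal R :=
  Ideal.span ((fun x : R => x ^ q) '' (I : Set R))

theorem aip_add {d : ℕ} (a : Fin d → ℝ) (u v : Fin d → ℤ) :
    aip a (u + v) = aip a u + aip a v := by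
  simp only [aip, Pi.add_apply, Int.cast_add, mul_add, Finset.sum_add_distrib]

theorem mlen_le_of_injective {R P Q : Type*} [Ring R] [AddCommGroup P] [AddCommGroup Q]
    [Module R P] [Module R Q] (f : P →ₗ[R] Q) (hf : Function.Injective f) :
    mlen R P ≤ mlen R Q :=
  WithBot.unbotD_mono (Order.krullDim_ne_bot_iff.mpr inferInstance)
    (Order.krullDim_le_of_strictMono _ (Submodule.map_strictMono_of_injective hf))

theorem Submodule.exists_injective_subquotient_map {R P Q : Type*} [Ring R] [AddCommGroup P]
    [AddCommGroup Q] [Module R P] [Module R Q] (f : P →ₗ[R] Q) {A A' : Submodule R P}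
    {B B' : Submodule R Q} (hAB : ∀ x ∈ A, f x ∈ B) (hA' : ∀ x ∈ A, f x ∈ B' ↔ x ∈ A') :
    ∃ φ : (A ⧸ A'.comap A.subtype) →ₗ[R] (B ⧸ B'.comap B.subtype),
      Function.Injective φ ∧
      ∀ x : A, ∃ y : B, (y : Q) = f x ∧ φ (Submodule.Quotient.mk x) = Submodule.Quotient.mk y := by
  let f' : A →ₗ[R] B := f.restrict hAB
  have hker : ∀ x : A, f' x ∈ B'.comap B.subtype ↔ x ∈ A'.comap A.subtype :=
    fun x => hA' x x.2
  refine ⟨Submodule.mapQ _ _ f' fun x hx => (hker x).mpr hx, ?_, fun x => ⟨f' x, rfl, rfl⟩⟩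
  refine LinearMap.ker_eq_bot.mp (Submodule.ker_liftQ_eq_bot _ _ _ fun x hx => ?_)
  exact (hker x).mp ((Submodule.Quotient.mk_eq_zero _).mp (LinearMap.mem_ker.mp hx))

section Truncation

variable {d : ℕ} {F : Type*} [Field F] {D : Subring F} {a : Fin d → ℝ} {ϑ : F → Fin d → ℤ}
  {M : Submodule D F} {N : (Fin d → ℤ) → Submodule D F}

theorem mem_of_mem_truncation {R : ℝ → ℝ → Prop}
    (hN : ∀ u, (N u : Set F) = (M : Set F) ∩ {x | x = 0 ∨ (x ≠ 0 ∧ R (aip a u) (aip a (ϑ x)))})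
    {u : Fin d → ℤ} {x : F} (hx : x ∈ N u) : x ∈ M := by
  rw [← SetLike.mem_coe, hN] at hx
  exact hx.1

/-- `R` is `≤` or `<`, covering both `M ∩ F_{≥u}` and `M ∩ F_{>u}`. -/
theorem mul_mem_truncation_iff {R : ℝ → ℝ → Prop} (hR : ∀ s t c, R (s + c) (t + c) ↔ R s t)
    (hmul : ∀ x y : F, x ≠ 0 → y ≠ 0 → ϑ (x * y) = ϑ x + ϑ y)
    (hN : ∀ u, (N u : Set F) = (M : Set F) ∩ {x | x = 0 ∨ (x ≠ 0 ∧ R (aip a u) (aip a (ϑ x)))})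
    {g : D} (hg : (g : F) ≠ 0) {x : F} (hx : x ∈ M) (u : Fin d → ℤ) :
    (g : F) * x ∈ N (u + ϑ g) ↔ x ∈ N u := by
  have hgx : (g : F) * x ∈ M := M.smul_mem g hx
  rw [← SetLike.mem_coe, hN, ← SetLike.mem_coe (x := x), hN]
  simp only [Set.mem_inter_iff, SetLike.mem_coe, hx, hgx, true_and, Set.mem_ofPred_eq, ne_eq,
    mul_eq_zero, hg, false_or]
  by_cases hx0 : x = 0
  · simp [hx0]
  · rw [hmul _ _ hg hx0, aip_add, aip_add, add_comm (aip a (ϑ g)), hR]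

end Truncation

theorem stmt_18_general {d : ℕ}
    (F : Type*) [Field F] (D : Subring F)
    (a : Fin d → ℝ)
    -- `ϑ` is an `a`-valuation on `F` with value group `ℤ^d`
    (ϑ : F → Fin d → ℤ)
    (hmul : ∀ x y : F, x ≠ 0 → y ≠ 0 → ϑ (x * y) = ϑ x + ϑ y)
    (r : ℕ)
    -- a `D`-submodule `M` of `F`, and its truncations `M ∩ F_{≥u}` and `M ∩ F_{>u}`
    (M : Submodule D F) (G G' : (Fin d → ℤ) → Submodule D F)
    (hG : ∀ u : Fin d → ℤ, (G u : Set F) =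
      (M : Set F) ∩ {x : F | x = 0 ∨ (x ≠ 0 ∧ aip a u ≤ aip a (ϑ x))})
    (hG' : ∀ u : Fin d → ℤ, (G' u : Set F) =
      (M : Set F) ∩ {x : F | x = 0 ∨ (x ≠ 0 ∧ aip a u < aip a (ϑ x))}) :
    -- multiplication by `g` induces a linear injection on the subquotients
    (∀ g : D, (g : F) ≠ 0 → ∀ u : Fin d → ℤ,
      ∃ φ : (↥(G u) ⧸ Submodule.comap (G u).subtype (G' u)) →ₗ[D]
          (↥(G (u + ϑ (g : F))) ⧸
            Submodule.comap (G (u + ϑ (g : F))).subtype (G' (u + ϑ (g : F)))),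
        Function.Injective φ ∧
        ∀ x : ↥(G u), ∃ y : ↥(G (u + ϑ (g : F))), (y : F) = (g : F) * (x : F) ∧
          φ (Submodule.Quotient.mk x) = Submodule.Quotient.mk y) ∧
    -- consequently `ϑ^{(h)}(M) + S ⊆ ϑ^{(h)}(M)` for `1 ≤ h ≤ r`
    (∀ h : ℕ, 1 ≤ h → h ≤ r → ∀ u : Fin d → ℤ,
      (h : ℕ∞) ≤ mlen D (↥(G u) ⧸ Submodule.comap (G u).subtype (G' u)) →
      ∀ s ∈ ϑ '' {x : F | x ∈ D ∧ x ≠ 0},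
        (h : ℕ∞) ≤ mlen D (↥(G (u + s)) ⧸
          Submodule.comap (G (u + s)).subtype (G' (u + s)))) := by
  have mul_injective : ∀ g : D, (g : F) ≠ 0 → ∀ u : Fin d → ℤ, _ := fun g hg u =>
    Submodule.exists_injective_subquotient_map (LinearMap.lsmul D F g)
      (fun x hx => (mul_mem_truncation_iff (fun _ _ _ => add_le_add_iff_right _) hmul hG hg
        (mem_of_mem_truncation hG hx) u).mpr hx)
      (fun x hx => mul_mem_truncation_iff (fun _ _ _ => add_lt_add_iff_right _) hmul hG' hg
        (mem_of_mem_truncation hG hx) u)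
  refine ⟨mul_injective, ?_⟩
  rintro h - - u hlen - ⟨g, ⟨hgD, hg0⟩, rfl⟩
  obtain ⟨φ, hφ, -⟩ := mul_injective ⟨g, hgD⟩ hg0 u
  exact hlen.trans (mlen_le_of_injective φ hφ)

theorem stmt_18 {d : ℕ}
    (F : Type*) [Field F] (D : Subring F) [IsNoetherianRing D] [IsLocalRing D]
    -- `F` is the fraction field of `D`
    (hfrac : ∀ x : F, ∃ r s : D, (s : F) ≠ 0 ∧ x * (s : F) = (r : F))
    -- `a ∈ ℝ^d` has coordinates linearly independent over `ℚ`
    (a : Fin d → ℝ) (ha : ∀ c : Fin d → ℚ, (∑ i, (c i : ℝ) * a i) = 0 → c = 0)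
    -- `ϑ` is an `a`-valuation on `F` with value group `ℤ^d`
    (ϑ : F → Fin d → ℤ)
    (hmul : ∀ x y : F, x ≠ 0 → y ≠ 0 → ϑ (x * y) = ϑ x + ϑ y)
    (hsurj : ∀ u : Fin d → ℤ, ∃ x : F, x ≠ 0 ∧ ϑ x = u)
    (hultra : ∀ x y : F, x ≠ 0 → y ≠ 0 → x + y ≠ 0 →
      min (aip a (ϑ x)) (aip a (ϑ y)) ≤ aip a (ϑ (x + y)))
    -- OK (i): `D` is strongly dominated by the valuation ring of `ϑ`
    (hdom : ∀ x : D, (x : F) ≠ 0 → 0 ≤ aip a (ϑ (x : F)))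
    (hmax : ∀ x : D, x ∈ IsLocalRing.maximalIdeal D → (x : F) ≠ 0 → 0 < aip a (ϑ (x : F)))
    (hstrong : ∀ y ∈ coneOf (ϑ '' {x : F | x ∈ D ∧ x ≠ 0}), y ≠ 0 → 0 < rip a y)
    -- OK (ii): the residue field extension `k ↪ k_ϑ` is finite, of degree `r = [k_ϑ:k]`
    (V : Subring F) (hV : (V : Set F) = {x : F | x = 0 ∨ 0 ≤ aip a (ϑ x)})
    [IsLocalRing V] (hDV : D ≤ V) [IsLocalHom (Subring.inclusion hDV)]
    (hfin : (IsLocalRing.ResidueField.map (Subring.inclusion hDV)).Finite)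
    (r : ℕ)
    (hr : r =
      letI := (IsLocalRing.ResidueField.map (Subring.inclusion hDV)).toAlgebra
      Module.finrank (IsLocalRing.ResidueField D) (IsLocalRing.ResidueField V))
    -- OK (iii): there is `v₀` with `D ∩ F_{≥ n·v₀} ⊆ m^n` for all `n`
    (v0 : Fin d → ℤ)
    (hv0 : ∀ n : ℕ, ∀ x : D, (x : F) ≠ 0 → aip a ((n : ℤ) • v0) ≤ aip a (ϑ (x : F)) →
      x ∈ IsLocalRing.maximalIdeal D ^ n)
    -- a `D`-submodule `M` of `F`, and its truncations `M ∩ F_{≥u}` and `M ∩ F_{>u}`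
    (M : Submodule D F) (G G' : (Fin d → ℤ) → Submodule D F)
    (hG : ∀ u : Fin d → ℤ, (G u : Set F) =
      (M : Set F) ∩ {x : F | x = 0 ∨ (x ≠ 0 ∧ aip a u ≤ aip a (ϑ x))})
    (hG' : ∀ u : Fin d → ℤ, (G' u : Set F) =
      (M : Set F) ∩ {x : F | x = 0 ∨ (x ≠ 0 ∧ aip a u < aip a (ϑ x))}) :
    -- multiplication by `g` induces a linear injection on the subquotients
    (∀ g : D, (g : F) ≠ 0 → ∀ u : Fin d → ℤ,
      ∃ φ : (↥(G u) ⧸ Submodule.comap (G u).subtype (G' u)) →ₗ[D]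
          (↥(G (u + ϑ (g : F))) ⧸
            Submodule.comap (G (u + ϑ (g : F))).subtype (G' (u + ϑ (g : F)))),
        Function.Injective φ ∧
        ∀ x : ↥(G u), ∃ y : ↥(G (u + ϑ (g : F))), (y : F) = (g : F) * (x : F) ∧
          φ (Submodule.Quotient.mk x) = Submodule.Quotient.mk y) ∧
    -- consequently `ϑ^{(h)}(M) + S ⊆ ϑ^{(h)}(M)` for `1 ≤ h ≤ r`
    (∀ h : ℕ, 1 ≤ h → h ≤ r → ∀ u : Fin d → ℤ,
      (h : ℕ∞) ≤ mlen D (↥(G u) ⧸ Submodule.comap (G u).subtype (G' u)) →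
      ∀ s ∈ ϑ '' {x : F | x ∈ D ∧ x ≠ 0},
        (h : ℕ∞) ≤ mlen D (↥(G (u + s)) ⧸
          Submodule.comap (G (u + s)).subtype (G' (u + s)))) :=
  stmt_18_general F D a ϑ hmul r M G G' hG hG'

end
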